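/- arXiv:1603.09429 — 5 statements merged into one kernel-verified Lean document; each statement's English description precedes it below -/
import Mathlib

section
/- The operation r₁ * r₂ = finite zeroing of the pointwise ordinal sum r₁ + r₂ on ω²-CFs over a finite nonempty set S is not commutative: there exist ω²-CFs r₁, r₂ with r₁ * r₂ ≠ r₂ * r₁. -/
open scoped Classical in
/-- Finite zeroing of an ordinal-valued ranking: the state with minimal value
`ω·k + c` determines degree `k` and finite shift `c`; states at degree `k` are
mapped to their finite part minus `c`, and states at higher degree `m` are mapped
to `ω·(m - k) + c`. -/
noncomputable def fz {S : Type} (r : S → Ordinal) : S → Ordinal := fun s =>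
  if r s / Ordinal.omega0 = sInf (Set.range r) / Ordinal.omega0 then
    r s % Ordinal.omega0 - sInf (Set.range r) % Ordinal.omega0
  else
    Ordinal.omega0 * (r s / Ordinal.omega0 - sInf (Set.range r) / Ordinal.omega0)
      + sInf (Set.range r) % Ordinal.omega0

/-- The revision operation: finite zeroing of the pointwise ordinal sum. -/
noncomputable def star {S : Type} (r₁ r₂ : S → Ordinal) : S → Ordinal :=
  fz (fun s => r₁ s + r₂ s)

open Ordinal

set_option linter.unnecessarySeqFocus false

theorem star_not_commutative :
    ∃ (S : Type) (_ : Fintype S) (_ : Nonempty S) (r₁ r₂ : S → Ordinal),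
      (∀ s, r₁ s < Ordinal.omega0 ^ (2 : ℕ)) ∧ (∃ s, r₁ s = 0) ∧
      (∀ s, r₂ s < Ordinal.omega0 ^ (2 : ℕ)) ∧ (∃ s, r₂ s = 0) ∧
      star r₁ r₂ ≠ star r₂ r₁ := by
  have h : ω < ω ^ (2:ℕ) := by
    rw [pow_two]
    calc ω = ω * 1 := (mul_one _).symm
      _ < ω * ω := mul_lt_mul_of_pos_left one_lt_omega0 omega0_pos
  have h0 : (0:Ordinal) < ω ^ (2:ℕ) := omega0_pos.trans h
  have h1 : (1:Ordinal) < ω ^ (2:ℕ) := one_lt_omega0.trans h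
  refine ⟨Fin 3, inferInstance, inferInstance, ![0, ω, ω], ![ω, 0, 1], ?_, ⟨0, rfl⟩, ?_, ⟨1, rfl⟩, ?_⟩
  · intro s
    fin_cases s <;> simp only [Matrix.cons_val_zero, Matrix.cons_val_one, Matrix.head_cons,
      Matrix.cons_val_two, Matrix.tail_cons] <;> assumption
  · intro s
    fin_cases s <;> simp only [Matrix.cons_val_zero, Matrix.cons_val_one, Matrix.head_cons,
      Matrix.cons_val_two, Matrix.tail_cons] <;> assumption
  · have hsum1 : (fun s => (![0, ω, ω] : Fin 3 → Ordinal) s + ![ω, 0, 1] s)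
        = ![ω, ω, ω + 1] := by
      funext s; fin_cases s <;> simp
    have hsum2 : (fun s => (![ω, 0, 1] : Fin 3 → Ordinal) s + ![0, ω, ω] s)
        = ![ω, ω, ω] := by
      funext s; fin_cases s <;> simp [one_add_omega0]
    have hinf1 : sInf (Set.range (![ω, ω, ω + 1] : Fin 3 → Ordinal)) = ω := by
      apply le_antisymm
      · exact csInf_le' ⟨0, rfl⟩
      · apply le_csInf (Set.range_nonempty _)
        rintro x ⟨s, rfl⟩
        fin_cases s <;> simp [le_self_add] <;> exact (Order.le_succ ω)
    have hinf2 : sInf (Set.range (![ω, ω, ω] : Fin 3 → Ordinal)) = ω := by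
      apply le_antisymm
      · exact csInf_le' ⟨0, rfl⟩
      · apply le_csInf (Set.range_nonempty _)
        rintro x ⟨s, rfl⟩
        fin_cases s <;> simp
    have hdiv : ω / ω = (1:Ordinal) := div_self omega0_ne_zero
    have hdiv1 : (ω + 1) / ω = (1:Ordinal) := by
      have := mul_add_div 1 (omega0_ne_zero) (1:Ordinal)
      rw [mul_one] at this
      rw [this, div_eq_zero_of_lt one_lt_omega0, add_zero]
    have hmod : ω % ω = (0:Ordinal) := mod_self ω
    have hmod1 : (ω + 1) % ω = (1:Ordinal) := by
      have := mul_add_mod_self ω 1 (1:Ordinal)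
      rw [mul_one] at this
      rw [this, mod_eq_of_lt one_lt_omega0]
    intro hcontra
    have h2 := congrFun hcontra 2
    unfold _root_.star at h2
    rw [hsum1, hsum2] at h2
    unfold fz at h2
    rw [hinf1, hinf2] at h2
    simp only [Matrix.cons_val_two, Matrix.tail_cons, Matrix.head_cons] at h2
    rw [hdiv, hdiv1, hmod, hmod1] at h2
    simp at h2
end

section
/- The operation * (normalized ordinal addition via finite zeroing) on ω²-CFs over a finite nonempty set S is closed and every element has an inverse: for every ω²-CF r there exists an ω²-CF r′ with r * r′ equal to the constant zero function. -/
lemma fz_lt_omega_sq {S : Type} (f : S → Ordinal)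
    (hf : ∀ s, f s < Ordinal.omega0 ^ (2 : ℕ)) (s : S) :
    fz f s < Ordinal.omega0 ^ (2 : ℕ) := by
  have hpow : Ordinal.omega0 ^ (2 : ℕ) = Ordinal.omega0 * Ordinal.omega0 := pow_two _
  have hdiv : f s / Ordinal.omega0 < Ordinal.omega0 :=
    (Ordinal.div_lt Ordinal.omega0_ne_zero).mpr (hpow ▸ hf s)
  have hmodμ : sInf (Set.range f) % Ordinal.omega0 < Ordinal.omega0 :=
    Ordinal.mod_lt _ Ordinal.omega0_ne_zero
  unfold fz
  split
  · calc f s % Ordinal.omega0 - sInf (Set.range f) % Ordinal.omega0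
        ≤ f s % Ordinal.omega0 := Ordinal.sub_le_self _ _
      _ < Ordinal.omega0 := Ordinal.mod_lt _ Ordinal.omega0_ne_zero
      _ ≤ Ordinal.omega0 ^ (2 : ℕ) := by
          rw [hpow]
          exact Ordinal.le_mul_left _ Ordinal.omega0_pos
  · set d := f s / Ordinal.omega0 - sInf (Set.range f) / Ordinal.omega0 with hd
    have hdlt : d < Ordinal.omega0 := lt_of_le_of_lt (Ordinal.sub_le_self _ _) hdiv
    rw [hpow]
    calc Ordinal.omega0 * d + sInf (Set.range f) % Ordinal.omega0
        < Ordinal.omega0 * d + Ordinal.omega0 := by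
          exact (add_lt_add_iff_left _).mpr hmodμ
      _ = Ordinal.omega0 * (d + 1) := by rw [mul_add_one]
      _ ≤ Ordinal.omega0 * Ordinal.omega0 := by
          exact mul_le_mul_right (Order.succ_le_of_lt hdlt) _

lemma fz_exists_zero {S : Type} [Fintype S] [Nonempty S] (f : S → Ordinal) :
    ∃ s, fz f s = 0 := by
  have hmem : sInf (Set.range f) ∈ Set.range f := csInf_mem (Set.range_nonempty f)
  obtain ⟨s₀, hs₀⟩ := hmem
  refine ⟨s₀, ?_⟩
  unfold fz
  rw [hs₀, if_pos rfl, Ordinal.sub_self]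

theorem star_closed_and_inverses {S : Type} [Fintype S] [Nonempty S]
    (r : S → Ordinal) (hr : ∀ s, r s < Ordinal.omega0 ^ (2 : ℕ)) (hr0 : ∃ s, r s = 0) :
    (∀ r₂ : S → Ordinal, (∀ s, r₂ s < Ordinal.omega0 ^ (2 : ℕ)) → (∃ s, r₂ s = 0) →
      (∀ s, star r r₂ s < Ordinal.omega0 ^ (2 : ℕ)) ∧ (∃ s, star r r₂ s = 0)) ∧
    (∃ r' : S → Ordinal, (∀ s, r' s < Ordinal.omega0 ^ (2 : ℕ)) ∧ (∃ s, r' s = 0) ∧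
      star r r' = fun _ => 0) := by
  constructor
  · intro r₂ hr₂ _
    have hsum : ∀ s, r s + r₂ s < Ordinal.omega0 ^ (2 : ℕ) := by
      intro s
      have h := Ordinal.principal_add_omega0_opow (2 : Ordinal)
        (a := r s) (b := r₂ s)
      have ha := hr s; have hb := hr₂ s
      rw [← Ordinal.opow_natCast] at ha hb ⊢
      exact h (by exact_mod_cast ha) (by exact_mod_cast hb)
    exact ⟨fun s => fz_lt_omega_sq _ hsum s, fz_exists_zero _⟩
  · obtain ⟨s₀, hs₀⟩ := Finite.exists_max r
    refine ⟨fun s => r s₀ - r s, ?_, ⟨s₀, Ordinal.sub_self _⟩, ?_⟩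
    · intro s
      exact lt_of_le_of_lt (Ordinal.sub_le_self _ _) (hr s₀)
    · have hconst : (fun s => r s + (r s₀ - r s)) = fun _ => r s₀ := by
        funext s; exact Ordinal.add_sub_cancel_of_le (hs₀ s)
      have : star r (fun s => r s₀ - r s) = fz (fun _ => r s₀) := by
        show fz _ = _; rw [hconst]
      rw [this]
      funext s
      unfold fz
      have hrange : Set.range (fun _ : S => r s₀) = {r s₀} := Set.range_const
      rw [hrange, csInf_singleton, if_pos rfl, Ordinal.sub_self]
end

section
/- If φ is nearly counterfactual with respect to an OCF r (no single finite-valued revision makes φ believed), then no finite sequence of finite-valued revisions makes φ believed: there is no finite sequence r₁, …, rₙ of ω-CFs such that Bel(r * r₁ * ⋯ * rₙ) ⊨ φ. -/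
private lemma add_lt_om {a b : Ordinal} (ha : a < Ordinal.omega0)
    (hb : b < Ordinal.omega0) : a + b < Ordinal.omega0 := by
  obtain ⟨m, rfl⟩ := Ordinal.lt_omega0.1 ha
  obtain ⟨n, rfl⟩ := Ordinal.lt_omega0.1 hb
  rw [← Nat.cast_add]
  exact Ordinal.nat_lt_omega0 _

private lemma div_om_add (a : Ordinal) {c : Ordinal} (hc : c < Ordinal.omega0) :
    (a + c) / Ordinal.omega0 = a / Ordinal.omega0 := by
  conv_lhs => rw [← Ordinal.div_add_mod a Ordinal.omega0, add_assoc,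
    Ordinal.mul_add_div _ Ordinal.omega0_pos.ne']
  rw [Ordinal.div_eq_zero_of_lt (add_lt_om (Ordinal.mod_lt a Ordinal.omega0_pos.ne') hc),
    add_zero]

private lemma mod_om_add (a : Ordinal) {c : Ordinal} (hc : c < Ordinal.omega0) :
    (a + c) % Ordinal.omega0 = a % Ordinal.omega0 + c := by
  conv_lhs => rw [← Ordinal.div_add_mod a Ordinal.omega0, add_assoc,
    Ordinal.mul_add_mod_self]
  exact Ordinal.mod_eq_of_lt (add_lt_om (Ordinal.mod_lt a Ordinal.omega0_pos.ne') hc)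

private lemma div_om_eq_zero_iff {a : Ordinal} :
    a / Ordinal.omega0 = 0 ↔ a < Ordinal.omega0 := by
  constructor
  · intro h
    by_contra hlt
    push_neg at hlt
    have := Ordinal.div_add_mod a Ordinal.omega0
    rw [h, mul_zero, zero_add] at this
    exact absurd (this ▸ Ordinal.mod_lt a Ordinal.omega0_pos.ne') (not_lt.2 hlt)
  · exact Ordinal.div_eq_zero_of_lt

/-- Key invariant: revising by a finite-valued ranking preserves the ω-degree of
every state, and the result attains 0. -/
private lemma star_step {S : Type} [Fintype S] [Nonempty S]
    (g r' : S → Ordinal) (hg0 : ∃ s, g s = 0) (hr' : ∀ s, r' s < Ordinal.omega0) :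
    (∃ s, star g r' s = 0) ∧
      (∀ s, star g r' s / Ordinal.omega0 = g s / Ordinal.omega0) := by
  classical
  set h : S → Ordinal := fun s => g s + r' s with hh
  obtain ⟨s₀, hs₀⟩ := hg0
  -- the infimum is attained and is < ω
  have hne : (Set.range h).Nonempty := ⟨h s₀, Set.mem_range_self _⟩
  have hmem : sInf (Set.range h) ∈ Set.range h := csInf_mem hne
  have hle : sInf (Set.range h) ≤ h s₀ := csInf_le' (Set.mem_range_self _)
  have hfin : sInf (Set.range h) < Ordinal.omega0 := by
    refine lt_of_le_of_lt hle ?_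
    show g s₀ + r' s₀ < _
    rw [hs₀, zero_add]; exact hr' s₀
  have hsdiv : sInf (Set.range h) / Ordinal.omega0 = 0 :=
    Ordinal.div_eq_zero_of_lt hfin
  have hsmod : sInf (Set.range h) % Ordinal.omega0 = sInf (Set.range h) :=
    Ordinal.mod_eq_of_lt hfin
  have hdiv : ∀ s, h s / Ordinal.omega0 = g s / Ordinal.omega0 := fun s =>
    div_om_add (g s) (hr' s)
  constructor
  · obtain ⟨s₁, hs₁⟩ := hmem
    refine ⟨s₁, ?_⟩
    show fz h s₁ = 0
    unfold fz
    rw [if_pos (by rw [hs₁]), hs₁, Ordinal.sub_self]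
  · intro s
    show fz h s / Ordinal.omega0 = g s / Ordinal.omega0
    unfold fz
    split_ifs with hc
    · rw [hsmod]
      have h1 : h s / Ordinal.omega0 = 0 := by rw [hc, hsdiv]
      have h2 : h s < Ordinal.omega0 := div_om_eq_zero_iff.1 h1
      have : h s % Ordinal.omega0 - sInf (Set.range h) < Ordinal.omega0 :=
        lt_of_le_of_lt (le_trans (Ordinal.sub_le_self _ _)
          (le_of_eq (Ordinal.mod_eq_of_lt h2))) h2
      rw [Ordinal.div_eq_zero_of_lt this, ← hdiv s, h1]
    · rw [hsdiv, Ordinal.sub_zero, hsmod,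
        Ordinal.mul_add_div _ Ordinal.omega0_pos.ne',
        Ordinal.div_eq_zero_of_lt hfin, add_zero, hdiv]

/-- The invariant propagated along a list of finite-valued revisions. -/
private lemma fold_invariant {S : Type} [Fintype S] [Nonempty S]
    (L : List (S → Ordinal)) (hL : ∀ r' ∈ L, ∀ s, r' s < Ordinal.omega0) :
    ∀ g : S → Ordinal, (∃ s, g s = 0) →
      (∃ s, L.foldl star g s = 0) ∧
        (∀ s, L.foldl star g s / Ordinal.omega0 = g s / Ordinal.omega0) := by
  induction L with
  | nil => exact fun g hg => ⟨hg, fun s => rfl⟩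
  | cons a L ih =>
    intro g hg
    have ha : ∀ s, a s < Ordinal.omega0 := hL a List.mem_cons_self
    obtain ⟨h0, hdeg⟩ := star_step g a hg ha
    obtain ⟨h0', hdeg'⟩ := ih (fun r' hr' => hL r' (List.mem_cons_of_mem a hr')) _ h0
    exact ⟨h0', fun s => (hdeg' s).trans (hdeg s)⟩

/-- If no single finite-valued (ω-CF) revision makes φ believed, then no finite
sequence of finite-valued revisions makes φ believed. -/
theorem nearly_counterfactual_no_finite_sequence {S : Type} [Fintype S] [Nonempty S]
    (r : S → Ordinal) (hr : ∀ s, r s < Ordinal.omega0 ^ (2 : ℕ)) (hr0 : ∃ s, r s = 0)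
    (φ : Set S)
    (hnc : ¬ ∃ r' : S → Ordinal, (∀ s, r' s < Ordinal.omega0) ∧ (∃ s, r' s = 0) ∧
      {s | star r r' s = 0} ⊆ φ) :
    ¬ ∃ L : List (S → Ordinal), L ≠ [] ∧
      (∀ r' ∈ L, (∀ s, r' s < Ordinal.omega0) ∧ ∃ s, r' s = 0) ∧
      {s | L.foldl star r s = 0} ⊆ φ := by
  classical
  rintro ⟨L, -, hLcf, hsub⟩
  obtain ⟨⟨s₀, hs₀⟩, hdeg⟩ :=
    fold_invariant L (fun r' h s => (hLcf r' h).1 s) r hr0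
  have hs₀φ : s₀ ∈ φ := hsub hs₀
  have hrs₀ : r s₀ < Ordinal.omega0 := by
    have := hdeg s₀
    rw [hs₀, Ordinal.zero_div] at this
    exact div_om_eq_zero_iff.1 this.symm
  -- build a single revision whose unique minimum is at s₀
  refine hnc ⟨fun s => if s = s₀ then 0 else r s₀ + 1, ?_, ⟨s₀, by simp⟩, ?_⟩
  · intro s
    dsimp only
    split_ifs
    · exact Ordinal.omega0_pos
    · exact add_lt_om hrs₀ Ordinal.one_lt_omega0
  · set r' : S → Ordinal := fun s => if s = s₀ then 0 else r s₀ + 1 with hr'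
    set h : S → Ordinal := fun s => r s + r' s with hh
    have hhs₀ : h s₀ = r s₀ := by simp [hh, hr']
    have hmin : ∀ s, s ≠ s₀ → r s₀ < h s := by
      intro s hs
      have : h s = r s + (r s₀ + 1) := by simp [hh, hr', hs]
      rw [this]
      calc r s₀ < r s₀ + 1 := lt_add_one _
        _ ≤ r s + (r s₀ + 1) := le_add_self
    have hsinf : sInf (Set.range h) = r s₀ := by
      apply le_antisymm
      · exact hhs₀ ▸ csInf_le' (Set.mem_range_self s₀)
      · refine le_csInf ⟨h s₀, Set.mem_range_self _⟩ ?_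
        rintro x ⟨s, rfl⟩
        by_cases hs : s = s₀
        · rw [hs, hhs₀]
        · exact (hmin s hs).le
    intro s hs
    show s ∈ φ
    have hfz : fz h s = 0 := hs
    unfold fz at hfz
    rw [hsinf, Ordinal.div_eq_zero_of_lt hrs₀, Ordinal.mod_eq_of_lt hrs₀] at hfz
    split_ifs at hfz with hc
    · -- h s < ω, and h s % ω - r s₀ = 0 means h s ≤ r s₀, forcing s = s₀
      have hslt : h s < Ordinal.omega0 := div_om_eq_zero_iff.1 hc
      rw [Ordinal.mod_eq_of_lt hslt, Ordinal.sub_eq_zero_iff_le] at hfz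
      by_contra hne
      exact absurd hfz (not_le.2 (hmin s fun h' => hne (h' ▸ hs₀φ)))
    · -- the else branch is ≥ ω, contradiction
      exfalso
      rw [Ordinal.sub_zero] at hfz
      have : h s / Ordinal.omega0 ≠ 0 := hc
      have hpos : 0 < Ordinal.omega0 * (h s / Ordinal.omega0) :=
        mul_pos Ordinal.omega0_pos (pos_iff_ne_zero.2 this)
      have := hfz ▸ (lt_of_lt_of_le hpos le_self_add)
      exact lt_irrefl 0 this
end

section
/- If r is an ω-CF (finite-valued) over a finite nonempty set of states and r_φ is a φ-strengthening with finite degree of strength d ≥ 1 (r_φ(s) = 0 iff s ⊨ φ, and r_φ(s) ≥ 1 otherwise), then there exists n ∈ ℕ such that Bel(r *ⁿ r_φ) ⊨ φ, where *ⁿ denotes n-fold iterated application of * with r_φ. -/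
private lemma sInf_range_natCast {S : Type} [Fintype S] [Nonempty S] (k : S → ℕ) :
    sInf (Set.range (fun s : S => ((k s : ℕ) : Ordinal))) =
      ((Finset.univ.inf' Finset.univ_nonempty k : ℕ) : Ordinal) := by
  apply le_antisymm
  · obtain ⟨s₀, _, hs₀⟩ := Finset.exists_mem_eq_inf' (Finset.univ_nonempty) k
    rw [hs₀]
    exact csInf_le (OrderBot.bddBelow _) ⟨s₀, rfl⟩
  · apply le_csInf (Set.range_nonempty _)
    rintro b ⟨s, rfl⟩
    exact_mod_cast Nat.cast_le.mpr (Finset.inf'_le _ (Finset.mem_univ s))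

private lemma starNatCastAux {S : Type} [Fintype S] [Nonempty S] (g k : S → ℕ) :
    _root_.star (fun s => ((g s : ℕ) : Ordinal)) (fun s => ((k s : ℕ) : Ordinal)) =
      fun s => ((g s + k s
        - Finset.univ.inf' Finset.univ_nonempty (fun t => g t + k t) : ℕ) : Ordinal) := by
  funext s
  unfold _root_.star fz
  simp only [← Nat.cast_add]
  rw [sInf_range_natCast (fun t => g t + k t)]
  rw [Ordinal.div_eq_zero_of_lt (Ordinal.nat_lt_omega0 _),
      Ordinal.div_eq_zero_of_lt (Ordinal.nat_lt_omega0 _),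
      if_pos rfl,
      Ordinal.mod_eq_of_lt (Ordinal.nat_lt_omega0 _),
      Ordinal.mod_eq_of_lt (Ordinal.nat_lt_omega0 _),
      ← Ordinal.natCast_sub]

private lemma inf'_sub_const {S : Type} [Fintype S] [Nonempty S] (A : S → ℕ) (c : ℕ)
    (hc : ∀ t, c ≤ A t) :
    Finset.univ.inf' Finset.univ_nonempty (fun t => A t - c)
      = Finset.univ.inf' Finset.univ_nonempty A - c := by
  apply le_antisymm
  · obtain ⟨t₁, _, ht₁⟩ := Finset.exists_mem_eq_inf' (Finset.univ_nonempty) A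
    calc Finset.univ.inf' Finset.univ_nonempty (fun t => A t - c) ≤ A t₁ - c :=
          Finset.inf'_le _ (Finset.mem_univ t₁)
      _ = _ := by rw [ht₁]
  · apply Finset.le_inf'
    intro t _
    exact Nat.sub_le_sub_right (Finset.inf'_le _ (Finset.mem_univ t)) c

open scoped Classical in
/-- Finite improvement: iterated revision by a finite-strength φ-strengthening of a
finite-valued OCF eventually makes φ believed. -/
theorem finite_improvement {S : Type} [Fintype S] [Nonempty S]
    (r : S → Ordinal) (hr : ∀ s, r s < Ordinal.omega0) (hr0 : ∃ s, r s = 0)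
    (φ : Set S) (hφ : ∃ s, s ∈ φ)
    (rφ : S → Ordinal) (hrφfin : ∀ s, rφ s < Ordinal.omega0)
    (hstr : ∀ s, rφ s = 0 ↔ s ∈ φ) :
    ∃ n : ℕ, {s | ((fun g => star g rφ)^[n] r) s = 0} ⊆ φ := by
  choose r' hr' using fun s => Ordinal.lt_omega0.1 (hr s)
  choose f hf using fun s => Ordinal.lt_omega0.1 (hrφfin s)
  have hrφeq : rφ = fun s => ((f s : ℕ) : Ordinal) := funext hf
  set C : ℕ → ℕ := fun n => Finset.univ.inf' Finset.univ_nonempty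
    (fun t => r' t + n * f t) with hC
  have hCle : ∀ n s, C n ≤ r' s + n * f s := fun n s => Finset.inf'_le _ (Finset.mem_univ s)
  have key : ∀ n, ((fun g => star g rφ)^[n] r)
      = fun s => ((r' s + n * f s - C n : ℕ) : Ordinal) := by
    intro n
    induction n with
    | zero =>
      simp only [Function.iterate_zero, id]
      funext s
      have hC0 : C 0 = 0 := by
        obtain ⟨s0, h0⟩ := hr0
        have hr0' : (r' s0 : Ordinal) = 0 := by rw [← hr' s0, h0]
        have hr0n : r' s0 = 0 := by exact_mod_cast hr0'
        have h1 := hCle 0 s0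
        omega
      rw [hr' s]; congr 1; omega
    | succ n ih =>
      rw [Function.iterate_succ_apply', ih, hrφeq, starNatCastAux]
      funext s
      have heq : (fun t => r' t + n * f t - C n + f t)
          = fun t => (r' t + (n + 1) * f t) - C n := by
        funext t
        have := hCle n t
        ring_nf
        omega
      rw [heq, inf'_sub_const _ _ (fun t => (hCle n t).trans (by ring_nf; omega))]
      have hCC : C n ≤ C (n + 1) := by
        apply Finset.le_inf'
        intro t _
        exact (hCle n t).trans (by ring_nf; omega)
      have h2 : Finset.univ.inf' Finset.univ_nonempty (fun t => r' t + (n + 1) * f t)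
          = C (n + 1) := rfl
      rw [h2]
      congr 1
      have h0 := hCle n s
      have h1 := hCle (n + 1) s
      have hm : (n + 1) * f s = n * f s + f s := by ring
      rw [hm] at h1 ⊢
      set m := n * f s with hmdef
      omega
  -- choose n larger than all values of r'
  refine ⟨Finset.univ.sup r' + 1, ?_⟩
  intro s hs
  by_contra hs'
  set n := Finset.univ.sup r' + 1 with hn
  have hzero : ((r' s + n * f s - C n : ℕ) : Ordinal) = 0 := by
    have := hs
    rwa [key n] at this
  have hzn : r' s + n * f s - C n = 0 := by exact_mod_cast hzero
  obtain ⟨t, ht⟩ := hφ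
  have hft : f t = 0 := by
    have : (f t : Ordinal) = 0 := by rw [← hf t]; exact (hstr t).2 ht
    exact_mod_cast this
  have hfs : 1 ≤ f s := by
    rcases Nat.eq_zero_or_pos (f s) with h | h
    · exact absurd ((hstr s).1 (by rw [hf s, h]; simp)) hs'
    · exact h
  have hCt : C n ≤ r' t := by
    have h := hCle n t
    rwa [hft, Nat.mul_zero, Nat.add_zero] at h
  have hrt : r' t ≤ Finset.univ.sup r' := Finset.le_sup (Finset.mem_univ t)
  have hbig : n ≤ n * f s := by
    calc n = n * 1 := (Nat.mul_one n).symm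
    _ ≤ n * f s := Nat.mul_le_mul_left n hfs
  omega
end

section
/- There exists an ω²-CF r and a φ-strengthening r_φ with only finite values such that for no n ∈ ℕ does Bel(r *ⁿ r_φ) ⊨ φ; i.e., property (I*) fails for ω²-CFs: finite-strength improvements never force belief in a formula whose models all have infinite rank. -/
open Ordinal

universe u

lemma div_o : (omega0.{u} + 1) / omega0 = 1 := by
  rw [show omega0 + 1 = omega0 * 1 + 1 by rw [mul_one], Ordinal.mul_add_div _ omega0_ne_zero,
    Ordinal.div_eq_zero_of_lt one_lt_omega0, add_zero]

lemma range_bool (g : Bool → Ordinal.{u}) (h : g false ≤ g true) :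
    sInf (Set.range g) = g false := by
  apply le_antisymm (csInf_le (OrderBot.bddBelow _) (Set.mem_range_self false))
  apply le_csInf (Set.range_nonempty _)
  rintro x ⟨b, rfl⟩; cases b <;> simp [h]

noncomputable def myr : Bool → Ordinal.{u} := fun b => if b then omega0 else 0
noncomputable def myrphi : Bool → Ordinal.{u} := fun b => if b then 0 else 1
noncomputable def myr1 : Bool → Ordinal.{u} := fun b => if b then omega0 + 1 else 0

lemma fz_aux (g : Bool → Ordinal.{u}) (hgt : g true = omega0 ∨ g true = omega0 + 1)
    (hgf : g false = 1) : fz g = myr1.{u} := by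
  have h1 : g false ≤ g true := by
    rcases hgt with h | h <;> rw [h, hgf]
    · exact one_lt_omega0.le
    · exact one_lt_omega0.le.trans (le_add_right le_rfl)
  have hs : sInf (Set.range g) = 1 := by rw [range_bool g h1, hgf]
  have hdt : g true / omega0 = 1 := by
    rcases hgt with h | h
    · rw [h, Ordinal.div_self omega0_ne_zero]
    · rw [h, div_o]
  funext b
  cases b
  · simp only [fz, hs, hgf]
    rw [if_pos trivial, Ordinal.sub_self]; rfl
  · simp only [fz, hs, hdt, Ordinal.div_eq_zero_of_lt one_lt_omega0,
      Ordinal.mod_eq_of_lt one_lt_omega0]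
    rw [if_neg one_ne_zero, Ordinal.sub_zero, mul_one]; rfl

lemma step1 : star myr.{u} myrphi.{u} = myr1.{u} :=
  fz_aux _ (Or.inl (by simp [myr, myrphi])) (by simp [myr, myrphi])

lemma step2 : star myr1.{u} myrphi.{u} = myr1.{u} :=
  fz_aux _ (Or.inr (by simp [myr1, myrphi])) (by simp [myr1, myrphi])

lemma iter_cases (n : ℕ) :
    (fun g => star g myrphi.{u})^[n] myr.{u} = myr.{u} ∨ (fun g => star g myrphi.{u})^[n] myr.{u} = myr1.{u} := by
  induction n with
  | zero => exact Or.inl rfl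
  | succ n ih =>
    right
    rcases ih with h | h
    · rw [Function.iterate_succ_apply']
      exact (congrArg (fun g => star g myrphi) h).trans step1
    · rw [Function.iterate_succ_apply']
      exact (congrArg (fun g => star g myrphi) h).trans step2

/-- (I*) fails for ω²-CFs: there is an ω²-CF `r` and a finite-valued φ-strengthening
such that no finite number of improvements forces belief in φ. -/
theorem improvement_fails_omega_sq :
    ∃ (S : Type) (_ : Fintype S) (_ : Nonempty S) (φ : Set S) (r rφ : S → Ordinal),
      (∃ s, s ∈ φ) ∧ (∃ s, s ∉ φ) ∧
      (∀ s, r s < Ordinal.omega0 ^ (2 : ℕ)) ∧ (∃ s, r s = 0) ∧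
      (∀ s, rφ s < Ordinal.omega0) ∧ (∀ s, rφ s = 0 ↔ s ∈ φ) ∧
      ∀ n : ℕ, ¬ ({s | ((fun g => star g rφ)^[n] r) s = 0} ⊆ φ) := by
  refine ⟨Bool, inferInstance, inferInstance, {b | b = true}, myr, myrphi,
    ⟨true, rfl⟩, ⟨false, by simp⟩, ?_, ⟨false, by simp [myr]⟩, ?_, ?_, ?_⟩
  · have hlt : omega0 < omega0 ^ (2 : ℕ) := by
      rw [pow_two]
      calc omega0 = omega0 * 1 := (mul_one _).symm
        _ < omega0 * omega0 :=
          mul_lt_mul_of_pos_left one_lt_omega0 omega0_pos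
    intro b
    cases b
    · simpa [myr] using omega0_pos.trans hlt
    · simpa [myr] using hlt
  · intro b
    cases b
    · simpa [myrphi] using one_lt_omega0
    · simpa [myrphi] using omega0_pos
  · intro b
    cases b
    · simp [myrphi]
    · simp [myrphi]
  · intro n hsub
    have hf : ((fun g => star g myrphi)^[n] myr) false = 0 := by
      rcases iter_cases n with h | h <;> rw [h] <;> simp [myr, myr1]
    exact absurd (hsub hf) (by simp)
end
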